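/- arXiv:1610.05700 — 3 statements merged into one kernel-verified Lean document; each statement's English description precedes it below -/
import Mathlib

section
/- There exists a constant C, depending only on α, β, p₀, K and θ, with the following property. Let V be a real normed space, a an element of the continuous dual V*, x ∈ V, and let f, b, h be nonnegative real numbers. If (i) 2·a(x) + (p₀−1)·b + θ·‖x‖_V^α ≤ f + K·h², and (ii) ‖a‖_{V*}^{α/(α−1)} ≤ (f + K·‖x‖_V^α)·(1 + h^β), then b ≤ C·(1 + f^{p₀/2} + h^{p₀} + ‖x‖_V^α + ‖x‖_V^α·h^β). -/
/-!
Test the coercivity inequality against the dual pairing: by Young's inequality with the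
conjugate exponents `α` and `q = α / (α - 1)`, `-2 a(x) ≤ ‖x‖^α + 2^q ‖a‖^q`, so the
`θ ‖x‖^α` term absorbs the `x`-part and the growth assumption bounds `‖a‖^q` by
`(f + K ‖x‖^α)(1 + h^β)`. Every resulting term is dominated by
`1 + f^(p₀/2) + h^p₀ + ‖x‖^α + ‖x‖^α h^β`; for the mixed term `f h^β` write
`h^β = (h²)^(β/2)` and compare both `f` and `h²` with their maximum, using `β + 2 ≤ p₀`.
-/

open Real

lemma rpow_le_one_add_rpow {x s r : ℝ} (hx : 0 ≤ x) (hs : 0 ≤ s) (hsr : s ≤ r) :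
    x ^ s ≤ 1 + x ^ r := by
  rcases le_total x 1 with hx1 | hx1
  · linarith [rpow_le_one hx hx1 hs, rpow_nonneg hx r]
  · linarith [rpow_le_rpow_of_exponent_le hx1 hsr]

lemma mul_rpow_le_one_add_rpow_add_rpow {f h β p : ℝ} (hf : 0 ≤ f) (hh : 0 ≤ h)
    (hβ : 0 ≤ β) (hp : β + 2 ≤ p) :
    f * h ^ β ≤ 1 + f ^ (p / 2) + h ^ p := by
  set m := max f (h ^ 2)
  have hm : 0 ≤ m := hf.trans (le_max_left _ _)
  have hsq : ∀ r : ℝ, h ^ r = (h ^ 2) ^ (r / 2) := fun r => by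
    rw [← rpow_natCast, ← rpow_mul hh]; ring_nf
  have hmax : m ^ (p / 2) ≤ f ^ (p / 2) + h ^ p := by
    rw [hsq p]
    obtain hm' | hm' : m = f ∨ m = h ^ 2 := max_choice f (h ^ 2) <;> rw [hm'] <;>
      linarith [rpow_nonneg hf (p / 2), rpow_nonneg (sq_nonneg h) (p / 2)]
  calc f * h ^ β ≤ m * m ^ (β / 2) := by
        rw [hsq β]
        gcongr
        exacts [le_max_left _ _, le_max_right _ _]
    _ = m ^ (1 + β / 2) := by
        rcases hm.eq_or_lt with hm0 | hm0
        · rw [← hm0, zero_rpow (by positivity : (0 : ℝ) < 1 + β / 2).ne', zero_mul]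
        · rw [rpow_add hm0, rpow_one]
    _ ≤ 1 + m ^ (p / 2) := rpow_le_one_add_rpow hm (by positivity) (by linarith)
    _ ≤ 1 + f ^ (p / 2) + h ^ p := by linarith

lemma ContinuousLinearMap.mul_abs_apply_le {V : Type*} [SeminormedAddCommGroup V]
    [NormedSpace ℝ V] (a : V →L[ℝ] ℝ) (x : V) {p q c : ℝ} (hpq : p.HolderConjugate q)
    (hc : 0 ≤ c) :
    c * |a x| ≤ ‖x‖ ^ p + c ^ q * ‖a‖ ^ q := by
  have hyoung := young_inequality_of_nonneg (norm_nonneg x) (mul_nonneg hc (norm_nonneg a)) hpq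
  rw [mul_rpow hc (norm_nonneg a)] at hyoung
  calc c * |a x| ≤ ‖x‖ * (c * ‖a‖) := by
        rw [← Real.norm_eq_abs, mul_left_comm, mul_comm ‖x‖]
        exact mul_le_mul_of_nonneg_left (a.le_opNorm x) hc
    _ ≤ ‖x‖ ^ p + c ^ q * ‖a‖ ^ q := by
        have := div_le_self (rpow_nonneg (norm_nonneg x) p) hpq.lt.le
        have := div_le_self (by positivity : 0 ≤ c ^ q * ‖a‖ ^ q) hpq.symm.lt.le
        linarith

lemma le_mul_growth_majorant {f h X β p K L : ℝ} (hf : 0 ≤ f) (hh : 0 ≤ h) (hX : 0 ≤ X)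
    (hβ : 0 ≤ β) (hp : β + 2 ≤ p) (hK : 0 ≤ K) (hL : 0 ≤ L) :
    f + K * h ^ 2 + X + L * ((f + K * X) * (1 + h ^ β)) ≤
      (2 + K + L * (2 + 2 * K)) * (1 + f ^ (p / 2) + h ^ p + X + X * h ^ β) := by
  set S := 1 + f ^ (p / 2) + h ^ p + X + X * h ^ β
  have hfp := rpow_nonneg hf (p / 2)
  have hhp := rpow_nonneg hh p
  have hXhβ := mul_nonneg hX (rpow_nonneg hh β)
  have hfS : f ≤ S := by
    linarith [rpow_one f ▸ rpow_le_one_add_rpow hf zero_le_one (by linarith : (1 : ℝ) ≤ p / 2)]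
  have hhS : h ^ 2 ≤ S := by
    have := rpow_le_one_add_rpow hh zero_le_two (by linarith : (2 : ℝ) ≤ p)
    rw [rpow_two] at this
    linarith
  have hfhS : f * h ^ β ≤ S := by linarith [mul_rpow_le_one_add_rpow_add_rpow hf hh hβ hp]
  have hXS : X ≤ S := by linarith
  have hXhS : X * h ^ β ≤ S := by linarith
  calc f + K * h ^ 2 + X + L * ((f + K * X) * (1 + h ^ β))
      = f + K * h ^ 2 + X + L * f + L * (f * h ^ β) + L * K * X + L * K * (X * h ^ β) := by
        ring
    _ ≤ S + K * S + S + L * S + L * S + L * K * S + L * K * S := by gcongr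
    _ = (2 + K + L * (2 + 2 * K)) * S := by ring

/-- Growth bound on `B` induced by the coercivity and growth assumptions
(Remark 2.1 of the paper). -/
theorem stmt_0 (α β p₀ K θ : ℝ) (hα : 1 < α) (hβ : 0 ≤ β) (hp₀ : β + 2 ≤ p₀)
    (hK : 0 ≤ K) (hθ : 0 < θ) :
    ∃ C : ℝ, ∀ (V : Type) (_ : NormedAddCommGroup V) (_ : NormedSpace ℝ V)
      (a : V →L[ℝ] ℝ) (x : V) (f b h : ℝ),
      0 ≤ f → 0 ≤ b → 0 ≤ h →
      2 * a x + (p₀ - 1) * b + θ * ‖x‖ ^ α ≤ f + K * h ^ 2 →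
      ‖a‖ ^ (α / (α - 1)) ≤ (f + K * ‖x‖ ^ α) * (1 + h ^ β) →
      b ≤ C * (1 + f ^ (p₀ / 2) + h ^ p₀ + ‖x‖ ^ α + ‖x‖ ^ α * h ^ β) := by
  set q := α / (α - 1)
  have hconj : α.HolderConjugate q := .conjExponent hα
  have h2q : (0 : ℝ) ≤ 2 ^ q := rpow_nonneg zero_le_two q
  refine ⟨(2 + K + 2 ^ q * (2 + 2 * K)) / (p₀ - 1), ?_⟩
  intro V _ _ a x f b h hf _ hh hcoer hgrowth
  have hX := rpow_nonneg (norm_nonneg x) α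
  have hpair : -(2 * a x) ≤ ‖x‖ ^ α + 2 ^ q * ‖a‖ ^ q :=
    le_trans (by linarith [neg_le_abs (a x)]) (a.mul_abs_apply_le x hconj zero_le_two)
  rw [div_mul_eq_mul_div, le_div_iff₀ (by linarith)]
  calc b * (p₀ - 1) ≤ f + K * h ^ 2 + ‖x‖ ^ α + 2 ^ q * ‖a‖ ^ q := by
        nlinarith [mul_nonneg hθ.le hX]
    _ ≤ f + K * h ^ 2 + ‖x‖ ^ α + 2 ^ q * ((f + K * ‖x‖ ^ α) * (1 + h ^ β)) := by gcongr
    _ ≤ _ := le_mul_growth_majorant hf hh hX hβ hp₀ hK h2q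
end

section
/- Let V be a separable real Banach space, H a real normed space, j : V → H a continuous linear map, and A : V → V* a map into the continuous dual of V. Let α > 1, β ≥ 0, L ≥ 0, K ≥ 0 and f ≥ 0 be constants. Assume: (i) (hemicontinuity) for all x, x̄, y ∈ V the map ε ↦ (A(x + ε·x̄))(y) is continuous from ℝ to ℝ; (ii) (local monotonicity) for all x, x̄ ∈ V, 2·(A(x) − A(x̄))(x − x̄) ≤ L·(1 + ‖x̄‖_V^α)·(1 + ‖j(x̄)‖_H^β)·‖j(x − x̄)‖_H²; (iii) (growth) for all x ∈ V, ‖A(x)‖_{V*}^{α/(α−1)} ≤ (f + K·‖x‖_V^α)·(1 + ‖j(x)‖_H^β). Then A is demicontinuous: whenever x_n → x in the norm of V, one has (A(x_n))(y) → (A(x))(y) for every y ∈ V. -/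
open Filter Set Topology Bornology

open Filter Set Topology

lemma minty_aux {V H : Type*} [NormedAddCommGroup V] [NormedSpace ℝ V]
    [NormedAddCommGroup H] [NormedSpace ℝ H]
    (j : V →L[ℝ] H) (A : V → (V →L[ℝ] ℝ))
    (α β L : ℝ) (hα : 0 ≤ α) (hβ : 0 ≤ β) (hL : 0 ≤ L)
    (hemi : ∀ x x' y : V, Continuous fun ε : ℝ => A (x + ε • x') y)
    (lmon : ∀ x x' : V,
      2 * (A x - A x') (x - x') ≤
        L * (1 + ‖x'‖ ^ α) * (1 + ‖j x'‖ ^ β) * ‖j (x - x')‖ ^ 2)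
    (x : V) (u : ℕ → V) (hu : Tendsto u atTop (𝓝 x))
    (M : ℝ) (hM : ∀ n, ‖A (u n)‖ ≤ M)
    (y : V) (c : ℝ) (hc : Tendsto (fun n => A (u n) y) atTop (𝓝 c)) :
    c = A x y := by
  -- Claim 1: key inequality for every ε
  have claim1 : ∀ ε : ℝ, 2 * ε * (A (x + ε • y) y - c) ≤
      ε ^ 2 * (L * (1 + ‖x + ε • y‖ ^ α) * (1 + ‖j (x + ε • y)‖ ^ β) * ‖j y‖ ^ 2) := by
    intro ε
    set v := x + ε • y with hv
    have hxv : x - v = -(ε • y) := by simp [hv]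
    have huv : ∀ n, u n - v = (u n - x) - ε • y := by intro n; simp [hv]; abel
    -- rewrite the left side
    have e1 : ∀ n, 2 * ((A (u n) - A v) (u n - v)) =
        2 * (A (u n) (u n - x) - ε * A (u n) y - A v (u n - v)) := by
      intro n
      rw [ContinuousLinearMap.sub_apply]
      rw [huv n, map_sub, map_smul]
      simp [smul_eq_mul]
    -- limit of term 1
    have hT1 : Tendsto (fun n => A (u n) (u n - x)) atTop (𝓝 0) := by
      refine squeeze_zero_norm (a := fun n => M * ‖u n - x‖) (fun n => ?_) ?_
      · calc ‖A (u n) (u n - x)‖ ≤ ‖A (u n)‖ * ‖u n - x‖ := (A (u n)).le_opNorm _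
          _ ≤ M * ‖u n - x‖ := mul_le_mul_of_nonneg_right (hM n) (norm_nonneg _)
      · have := tendsto_iff_norm_sub_tendsto_zero.mp hu
        simpa using this.const_mul M
    have hT3 : Tendsto (fun n => A v (u n - v)) atTop (𝓝 (A v (x - v))) :=
      ((A v).continuous.tendsto _).comp (hu.sub_const v)
    have hLHS : Tendsto (fun n => 2 * ((A (u n) - A v) (u n - v))) atTop
        (𝓝 (2 * ε * (A v y - c))) := by
      have h := ((hT1.sub (hc.const_mul ε)).sub hT3).const_mul 2
      have hval : 2 * ((0 : ℝ) - ε * c - A v (x - v)) = 2 * ε * (A v y - c) := by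
        rw [hxv, map_neg, map_smul]
        simp [smul_eq_mul]; ring
      rw [hval] at h
      refine h.congr fun n => (e1 n).symm
    have hRHS : Tendsto (fun n => L * (1 + ‖v‖ ^ α) * (1 + ‖j v‖ ^ β) * ‖j (u n - v)‖ ^ 2)
        atTop (𝓝 (ε ^ 2 * (L * (1 + ‖v‖ ^ α) * (1 + ‖j v‖ ^ β) * ‖j y‖ ^ 2))) := by
      have h : Tendsto (fun n => ‖j (u n - v)‖ ^ 2) atTop (𝓝 (‖j (x - v)‖ ^ 2)) :=
        (((j.continuous.tendsto _).comp (hu.sub_const v)).norm).pow 2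
      have hval : ‖j (x - v)‖ ^ 2 = ε ^ 2 * ‖j y‖ ^ 2 := by
        rw [hxv, map_neg, map_smul]
        rw [norm_neg, norm_smul, Real.norm_eq_abs, mul_pow, sq_abs]
      rw [hval] at h
      have h2 := h.const_mul (L * (1 + ‖v‖ ^ α) * (1 + ‖j v‖ ^ β))
      have hval2 : ε ^ 2 * (L * (1 + ‖v‖ ^ α) * (1 + ‖j v‖ ^ β) * ‖j y‖ ^ 2) =
          L * (1 + ‖v‖ ^ α) * (1 + ‖j v‖ ^ β) * (ε ^ 2 * ‖j y‖ ^ 2) := by ring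
      rw [hval2]
      exact h2
    exact le_of_tendsto_of_tendsto' hLHS hRHS fun n => lmon (u n) v
  -- Claim 2: uniform bound for the constant, for |ε| ≤ 1
  set C₀ : ℝ := L * (1 + (‖x‖ + ‖y‖) ^ α) * (1 + (‖j x‖ + ‖j y‖) ^ β) * ‖j y‖ ^ 2 with hC₀
  have claim2 : ∀ ε : ℝ, |ε| ≤ 1 →
      L * (1 + ‖x + ε • y‖ ^ α) * (1 + ‖j (x + ε • y)‖ ^ β) * ‖j y‖ ^ 2 ≤ C₀ := by
    intro ε hε
    have h1 : ‖x + ε • y‖ ≤ ‖x‖ + ‖y‖ := by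
      calc ‖x + ε • y‖ ≤ ‖x‖ + ‖ε • y‖ := norm_add_le _ _
        _ ≤ ‖x‖ + ‖y‖ := by
            rw [norm_smul, Real.norm_eq_abs]
            have := mul_le_of_le_one_left (norm_nonneg y) hε
            linarith
    have h2 : ‖j (x + ε • y)‖ ≤ ‖j x‖ + ‖j y‖ := by
      rw [map_add, map_smul]
      calc ‖j x + ε • j y‖ ≤ ‖j x‖ + ‖ε • j y‖ := norm_add_le _ _
        _ ≤ ‖j x‖ + ‖j y‖ := by
            rw [norm_smul, Real.norm_eq_abs]
            have := mul_le_of_le_one_left (norm_nonneg (j y)) hε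
            linarith
    have b1 := Real.rpow_le_rpow (norm_nonneg _) h1 hα
    have b2 := Real.rpow_le_rpow (norm_nonneg _) h2 hβ
    have n1 : (0:ℝ) ≤ 1 + ‖x + ε • y‖ ^ α := by positivity
    have n2 : (0:ℝ) ≤ 1 + ‖j (x + ε • y)‖ ^ β := by positivity
    have n3 : (0:ℝ) ≤ ‖j y‖ ^ 2 := by positivity
    apply mul_le_mul_of_nonneg_right _ n3
    exact mul_le_mul (mul_le_mul_of_nonneg_left (by linarith) hL) (by linarith) n2
      (by positivity)
  have claim3 : ∀ ε : ℝ, |ε| ≤ 1 → 2 * ε * (A (x + ε • y) y - c) ≤ ε ^ 2 * C₀ := fun ε hε =>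
    (claim1 ε).trans (mul_le_mul_of_nonneg_left (claim2 ε hε) (sq_nonneg ε))
  -- hemicontinuity limit
  have hcont : Tendsto (fun ε : ℝ => A (x + ε • y) y) (𝓝 0) (𝓝 (A x y)) := by
    have := (hemi x y y).tendsto 0
    simpa using this
  have hlin : Tendsto (fun ε : ℝ => c + ε * (C₀ / 2)) (𝓝 0) (𝓝 c) := by
    have : Tendsto (fun ε : ℝ => c + ε * (C₀ / 2)) (𝓝 0) (𝓝 (c + 0 * (C₀ / 2))) :=
      (tendsto_id.mul_const _).const_add c
    simpa using this
  have upper : A x y ≤ c := by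
    refine le_of_tendsto_of_tendsto
      (hcont.mono_left (nhdsWithin_le_nhds : 𝓝[Set.Ioi (0:ℝ)] 0 ≤ 𝓝 0))
      (hlin.mono_left (nhdsWithin_le_nhds : 𝓝[Set.Ioi (0:ℝ)] 0 ≤ 𝓝 0)) ?_
    filter_upwards [Ioc_mem_nhdsGT (zero_lt_one : (0:ℝ) < 1)] with ε hε
    have hε1 : |ε| ≤ 1 := abs_le.mpr ⟨by linarith [hε.1], hε.2⟩
    have h := claim3 ε hε1
    have hεpos : 0 < ε := hε.1
    nlinarith
  have lower : c ≤ A x y := by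
    refine le_of_tendsto_of_tendsto
      (hlin.mono_left (nhdsWithin_le_nhds : 𝓝[Set.Iio (0:ℝ)] 0 ≤ 𝓝 0))
      (hcont.mono_left (nhdsWithin_le_nhds : 𝓝[Set.Iio (0:ℝ)] 0 ≤ 𝓝 0)) ?_
    filter_upwards [Ico_mem_nhdsLT_of_mem (show (0:ℝ) ∈ Ioc (-1) 0 from ⟨by norm_num, le_refl 0⟩)]
      with ε hε
    have hε1 : |ε| ≤ 1 := abs_le.mpr ⟨hε.1, by linarith [hε.2]⟩
    have h := claim3 ε hε1
    have hεneg : ε < 0 := hε.2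
    nlinarith
  linarith

/-- Demicontinuity of a hemicontinuous, locally monotone operator satisfying the
growth condition (Remark 2.2 of the paper). -/
theorem stmt_1 (V H : Type*) [NormedAddCommGroup V] [NormedSpace ℝ V] [CompleteSpace V]
    [TopologicalSpace.SeparableSpace V]
    [NormedAddCommGroup H] [NormedSpace ℝ H]
    (j : V →L[ℝ] H) (A : V → (V →L[ℝ] ℝ))
    (α β L K f : ℝ) (hα : 1 < α) (hβ : 0 ≤ β) (hL : 0 ≤ L) (hK : 0 ≤ K) (hf : 0 ≤ f)
    (hemi : ∀ x x' y : V, Continuous fun ε : ℝ => A (x + ε • x') y)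
    (lmon : ∀ x x' : V,
      2 * (A x - A x') (x - x') ≤
        L * (1 + ‖x'‖ ^ α) * (1 + ‖j x'‖ ^ β) * ‖j (x - x')‖ ^ 2)
    (growth : ∀ x : V, ‖A x‖ ^ (α / (α - 1)) ≤ (f + K * ‖x‖ ^ α) * (1 + ‖j x‖ ^ β))
    (x : V) (xs : ℕ → V) (hx : Filter.Tendsto xs Filter.atTop (nhds x)) :
    ∀ y : V, Filter.Tendsto (fun n => A (xs n) y) Filter.atTop (nhds (A x y)) := by
  -- a uniform bound on the norms of the sequence
  obtain ⟨R₀, hR₀⟩ := (hx.norm).bddAbove_range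
  set R := max R₀ 0 with hR
  have hRnn : 0 ≤ R := le_max_right _ _
  have hRb : ∀ n, ‖xs n‖ ≤ R := fun n =>
    le_max_of_le_left (hR₀ (Set.mem_range_self n))
  -- a uniform bound on ‖A (xs n)‖
  set p : ℝ := α / (α - 1) with hp
  have hp0 : 0 < p := div_pos (by linarith) (by linarith)
  set B : ℝ := (f + K * R ^ α) * (1 + (‖j‖ * R) ^ β) with hB
  have hABp : ∀ n, ‖A (xs n)‖ ^ p ≤ B := by
    intro n
    refine (growth (xs n)).trans ?_
    have h1 : ‖xs n‖ ^ α ≤ R ^ α := Real.rpow_le_rpow (norm_nonneg _) (hRb n) (by linarith)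
    have h2 : ‖j (xs n)‖ ^ β ≤ (‖j‖ * R) ^ β := by
      refine Real.rpow_le_rpow (norm_nonneg _) ?_ hβ
      exact (j.le_opNorm _).trans (by
        exact mul_le_mul_of_nonneg_left (hRb n) (norm_nonneg j))
    have n1 : (0:ℝ) ≤ f + K * ‖xs n‖ ^ α := by positivity
    have n2 : (0:ℝ) ≤ 1 + (‖j‖ * R) ^ β := by positivity
    apply mul_le_mul _ (by linarith) (by positivity) (by positivity)
    have := mul_le_mul_of_nonneg_left h1 hK
    linarith
  set M : ℝ := B ^ p⁻¹ with hM
  have hAB : ∀ n, ‖A (xs n)‖ ≤ M := by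
    intro n
    have h := Real.rpow_le_rpow (Real.rpow_nonneg (norm_nonneg _) p) (hABp n)
      (inv_nonneg.mpr hp0.le)
    rwa [← Real.rpow_mul (norm_nonneg _), mul_inv_cancel₀ hp0.ne', Real.rpow_one] at h
  intro y
  apply tendsto_of_subseq_tendsto
  intro ns hns
  have hbdd : ∀ k, A (xs (ns k)) y ∈ Metric.closedBall (0:ℝ) (M * ‖y‖) := by
    intro k
    rw [Metric.mem_closedBall, Real.dist_eq, sub_zero]
    calc |A (xs (ns k)) y| ≤ ‖A (xs (ns k))‖ * ‖y‖ := (A (xs (ns k))).le_opNorm y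
      _ ≤ M * ‖y‖ := mul_le_mul_of_nonneg_right (hAB _) (norm_nonneg _)
  obtain ⟨c, -, φ, hφ, hcφ⟩ :=
    tendsto_subseq_of_bounded Metric.isBounded_closedBall hbdd
  refine ⟨φ, ?_⟩
  have huφ : Tendsto (fun k => xs (ns (φ k))) atTop (𝓝 x) :=
    hx.comp (hns.comp hφ.tendsto_atTop)
  have hc : c = A x y :=
    minty_aux j A α β L (by linarith) hβ hL hemi lmon x (fun k => xs (ns (φ k))) huφ
      M (fun k => hAB _) y c hcφ
  exact hc ▸ hcφ
end

section
/- Let K ≥ 0, let r ∈ [0, 7/3], let f : ℝ → ℝ be a measurable function with |f(x)| ≤ K·(1 + |x|^r) for all x ∈ ℝ, and let B ⊂ ℝ² be a fixed open ball. Then there exists a constant C (depending only on K, r and B) such that for all smooth compactly supported u, v : ℝ² → ℝ with support contained in B, |∫_{ℝ²} f(u)·v| ≤ C·(1 + ‖u‖_{L²}^{4/3}·‖u‖_{L⁶})·‖∇v‖_{L²}. -/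
open MeasureTheory ENNReal NNReal

lemma holder_const' {α : Type*} [MeasurableSpace α] (μ : Measure α) {s : Set α} {g : α → ℝ≥0∞}
    (hg : AEMeasurable g μ) (hs : Function.support g ⊆ s) {p q : ℝ}
    (hpq : Real.HolderConjugate p q) :
    ∫⁻ x, g x ∂μ ≤ μ s ^ (1/p) * (∫⁻ x, g x ^ q ∂μ) ^ (1/q) := by
  rw [← setLIntegral_eq_of_support_subset hs]
  have H := ENNReal.lintegral_mul_le_Lp_mul_Lq (μ.restrict s) hpq
    (f := fun _ => (1:ℝ≥0∞)) (g := g) aemeasurable_const hg.restrict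
  simp only [Pi.mul_apply, one_mul, ENNReal.one_rpow, lintegral_const,
    Measure.restrict_apply_univ] at H
  refine H.trans ?_
  gcongr
  · exact one_div_nonneg.2 hpq.symm.nonneg
  · exact Measure.restrict_le_self

set_option maxHeartbeats 1000000 in
/-- `W^{-1,2}`-growth estimate for the semilinear term `f(u)` in Example 7.1 of the
paper. -/
theorem stmt_11 (K r : ℝ) (hK : 0 ≤ K) (hr : r ∈ Set.Icc (0 : ℝ) (7 / 3))
    (f : ℝ → ℝ) (hf : Measurable f) (hfg : ∀ x : ℝ, |f x| ≤ K * (1 + |x| ^ r))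
    (c : EuclideanSpace ℝ (Fin 2)) (R : ℝ) (hR : 0 < R) :
    ∃ C : ℝ, ∀ u v : EuclideanSpace ℝ (Fin 2) → ℝ,
      ContDiff ℝ (⊤ : ℕ∞) u → HasCompactSupport u → Function.support u ⊆ Metric.ball c R →
      ContDiff ℝ (⊤ : ℕ∞) v → HasCompactSupport v → Function.support v ⊆ Metric.ball c R →
      |∫ x, f (u x) * v x| ≤
        C * (1 + ((∫ x, u x ^ 2) ^ ((1 : ℝ) / 2)) ^ ((4 : ℝ) / 3)
              * (∫ x, |u x| ^ (6 : ℕ)) ^ ((1 : ℝ) / 6))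
          * (∫ x, ‖gradient v x‖ ^ 2) ^ ((1 : ℝ) / 2) := by
  set μB : ℝ≥0∞ := volume (Metric.ball c R) with hμB
  set μcB : ℝ≥0∞ := volume (Metric.closedBall c R) with hμcB
  set C₂ : ℝ≥0 := eLpNormLESNormFDerivOfLeConst ℝ (volume : Measure (EuclideanSpace ℝ (Fin 2)))
    (Metric.ball c R) (3/2) 6 with hC₂
  set D : ℝ≥0∞ := (ENNReal.ofReal K * (2 * μB ^ ((5:ℝ)/6) + 1)) * C₂ * μcB ^ ((1:ℝ)/6) with hD
  have hμBt : μB ≠ ⊤ := Metric.isBounded_ball.measure_lt_top.ne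
  have hμcBt : μcB ≠ ⊤ := Metric.isBounded_closedBall.measure_lt_top.ne
  have hDt : D ≠ ⊤ := by
    refine ENNReal.mul_ne_top (ENNReal.mul_ne_top (ENNReal.mul_ne_top ENNReal.ofReal_ne_top ?_)
      ENNReal.coe_ne_top) (ENNReal.rpow_ne_top_of_nonneg (by norm_num) hμcBt)
    exact ENNReal.add_ne_top.2 ⟨ENNReal.mul_ne_top (by norm_num)
      (ENNReal.rpow_ne_top_of_nonneg (by norm_num) hμBt), ENNReal.one_ne_top⟩
  refine ⟨D.toReal, ?_⟩
  intro u v hu hcu hsu hv hcv hsv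
  set φ : EuclideanSpace ℝ (Fin 2) → ℝ≥0∞ := fun x => ENNReal.ofReal |u x| with hφ
  set ψ : EuclideanSpace ℝ (Fin 2) → ℝ≥0∞ := fun x => ENNReal.ofReal |v x| with hψ
  have hcf : Continuous (fderiv ℝ v) := hv.continuous_fderiv (by simp)
  set χ : EuclideanSpace ℝ (Fin 2) → ℝ≥0∞ := fun x => ENNReal.ofReal ‖fderiv ℝ v x‖ with hχ
  have mφ : Measurable φ := hu.continuous.abs.measurable.ennreal_ofReal
  have mψ : Measurable ψ := hv.continuous.abs.measurable.ennreal_ofReal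
  have mχ : Measurable χ := hcf.norm.measurable.ennreal_ofReal
  set U2 : ℝ≥0∞ := ∫⁻ x, φ x ^ (2:ℕ) with hU2
  set U6 : ℝ≥0∞ := ∫⁻ x, φ x ^ (6:ℕ) with hU6
  set V6 : ℝ≥0∞ := ∫⁻ x, ψ x ^ (6:ℕ) with hV6
  set G2 : ℝ≥0∞ := ∫⁻ x, χ x ^ (2:ℕ) with hG2
  set A : ℝ≥0∞ := U2 ^ ((2:ℝ)/3) * U6 ^ ((1:ℝ)/6) with hA
  set c₂ : ℝ≥0∞ := ENNReal.ofReal K with hc₂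
  set c₁ : ℝ≥0∞ := 2 * c₂ with hc₁
  -- step 1: bound the integral by a lintegral
  have step1 : ENNReal.ofReal |∫ x, f (u x) * v x| ≤
      ∫⁻ x, ENNReal.ofReal ‖f (u x) * v x‖ := by
    rw [← Real.norm_eq_abs, ofReal_norm]
    simp_rw [ofReal_norm]
    exact enorm_integral_le_lintegral_enorm _
  -- step 2: pointwise bound
  have hpt : ∀ x : EuclideanSpace ℝ (Fin 2), ENNReal.ofReal ‖f (u x) * v x‖ ≤
      c₁ * ψ x + c₂ * (φ x ^ ((7:ℝ)/3) * ψ x) := by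
    intro x
    have h2 : |u x| ^ r ≤ 1 + |u x| ^ ((7:ℝ)/3) := by
      rcases le_total (|u x|) 1 with h | h
      · have h1 := Real.rpow_le_one (abs_nonneg _) h hr.1
        have h3 : (0:ℝ) ≤ |u x| ^ ((7:ℝ)/3) := Real.rpow_nonneg (abs_nonneg _) _
        linarith
      · have h1 := Real.rpow_le_rpow_of_exponent_le h hr.2
        linarith
    have h1 : |f (u x)| ≤ 2*K + K * |u x| ^ ((7:ℝ)/3) := by
      refine (hfg _).trans ?_
      nlinarith [mul_le_mul_of_nonneg_left h2 hK]
    calc ENNReal.ofReal ‖f (u x) * v x‖ = ENNReal.ofReal (|f (u x)| * |v x|) := by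
          rw [Real.norm_eq_abs, abs_mul]
      _ ≤ ENNReal.ofReal ((2*K + K * |u x| ^ ((7:ℝ)/3)) * |v x|) :=
          ENNReal.ofReal_le_ofReal (mul_le_mul_of_nonneg_right h1 (abs_nonneg _))
      _ = c₁ * ψ x + c₂ * (φ x ^ ((7:ℝ)/3) * ψ x) := by
          rw [ENNReal.ofReal_mul (by positivity), ENNReal.ofReal_add (by positivity)
            (by positivity), ENNReal.ofReal_mul hK, ENNReal.ofReal_mul (by norm_num),
            ← ENNReal.ofReal_rpow_of_nonneg (abs_nonneg _) (by norm_num)]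
          simp only [hc₁, hc₂, hφ, hψ]
          rw [ENNReal.ofReal_ofNat]
          ring
  -- step 3: split the lintegral
  have step3 : ∫⁻ x, (c₁ * ψ x + c₂ * (φ x ^ ((7:ℝ)/3) * ψ x)) =
      c₁ * (∫⁻ x, ψ x) + c₂ * ∫⁻ x, φ x ^ ((7:ℝ)/3) * ψ x := by
    rw [lintegral_add_left (mψ.const_mul c₁), lintegral_const_mul' _ _ (by
      rw [hc₁]; exact ENNReal.mul_ne_top (by norm_num) ENNReal.ofReal_ne_top),
      lintegral_const_mul' _ _ (by rw [hc₂]; exact ENNReal.ofReal_ne_top)]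
  -- step 4: L¹ bound on ψ
  have hT1 : ∫⁻ x, ψ x ≤ μB ^ ((5:ℝ)/6) * V6 ^ ((1:ℝ)/6) := by
    have hsupp : Function.support ψ ⊆ Metric.ball c R := by
      intro x hx
      refine hsv ?_
      intro h0
      apply hx
      simp [hψ, h0]
    have H := holder_const' volume mψ.aemeasurable hsupp
      (p := 6/5) (q := 6) ⟨by norm_num, by norm_num, by norm_num⟩
    norm_num [-EuclideanSpace.volume_ball_fin_two] at H
    rw [hμB, hV6]
    exact H
  -- step 5+6
  have hT2 : ∫⁻ x, φ x ^ ((7:ℝ)/3) * ψ x ≤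
      (∫⁻ x, φ x ^ ((14:ℝ)/5)) ^ ((5:ℝ)/6) * V6 ^ ((1:ℝ)/6) := by
    have H := ENNReal.lintegral_mul_le_Lp_mul_Lq (volume : Measure (EuclideanSpace ℝ (Fin 2)))
      (p := 6/5) (q := 6) ⟨by norm_num, by norm_num, by norm_num⟩
      (f := fun x => φ x ^ ((7:ℝ)/3)) (g := ψ)
      (mφ.pow_const _).aemeasurable mψ.aemeasurable
    simp only [Pi.mul_apply] at H
    simp_rw [← ENNReal.rpow_mul] at H
    norm_num at H
    rw [hV6]
    exact H
  have hT3 : ∫⁻ x, φ x ^ ((14:ℝ)/5) ≤ U2 ^ ((4:ℝ)/5) * U6 ^ ((1:ℝ)/5) := by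
    have H := ENNReal.lintegral_mul_le_Lp_mul_Lq (volume : Measure (EuclideanSpace ℝ (Fin 2)))
      (p := 5/4) (q := 5) ⟨by norm_num, by norm_num, by norm_num⟩
      (f := fun x => φ x ^ ((8:ℝ)/5)) (g := fun x => φ x ^ ((6:ℝ)/5))
      (mφ.pow_const _).aemeasurable (mφ.pow_const _).aemeasurable
    simp only [Pi.mul_apply] at H
    simp_rw [← ENNReal.rpow_mul] at H
    norm_num at H
    rw [hU2, hU6]
    refine le_trans (le_of_eq ?_) H
    refine lintegral_congr fun x => ?_
    rw [← ENNReal.rpow_add_of_nonneg _ _ (by norm_num : (0:ℝ) ≤ 8/5) (by norm_num : (0:ℝ) ≤ 6/5)]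
    norm_num
  -- step 7: Sobolev
  have hSv : V6 ^ ((1:ℝ)/6) ≤ (C₂ : ℝ≥0∞) * (∫⁻ x, χ x ^ ((3:ℝ)/2)) ^ ((2:ℝ)/3) := by
    have hS := eLpNorm_le_eLpNorm_fderiv_of_le (F := ℝ)
      (volume : Measure (EuclideanSpace ℝ (Fin 2)))
      (hv.of_le (by simp)) hsv (p := 3/2) (q := 6)
      (by rw [← NNReal.coe_le_coe]; push_cast; norm_num)
      (by rw [finrank_euclideanSpace_fin, ← NNReal.coe_lt_coe]; push_cast; norm_num)
      (by rw [finrank_euclideanSpace_fin]; push_cast; norm_num) Metric.isBounded_ball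
    have e1 : eLpNorm v ((6:ℝ≥0) : ℝ≥0∞) volume = V6 ^ ((1:ℝ)/6) := by
      rw [hV6, eLpNorm_eq_lintegral_rpow_enorm_toReal (by simp) ENNReal.coe_ne_top]
      have hx : ∀ x : EuclideanSpace ℝ (Fin 2), (‖v x‖ₑ) = ψ x := fun x => by
        rw [hψ, ← ofReal_norm, Real.norm_eq_abs]
      simp_rw [hx]
      norm_num
    have e2 : eLpNorm (fderiv ℝ v) ((3/2:ℝ≥0) : ℝ≥0∞) volume =
        (∫⁻ x, χ x ^ ((3:ℝ)/2)) ^ ((2:ℝ)/3) := by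
      rw [eLpNorm_eq_lintegral_rpow_enorm_toReal (by simp) ENNReal.coe_ne_top]
      have hx : ∀ x : EuclideanSpace ℝ (Fin 2), (‖fderiv ℝ v x‖ₑ) = χ x := fun x => by
        rw [hχ, ← ofReal_norm]
      simp_rw [hx]
      norm_num
    rw [e1, e2] at hS
    exact hS
  -- step 8
  have hT4 : (∫⁻ x, χ x ^ ((3:ℝ)/2)) ^ ((2:ℝ)/3) ≤ μcB ^ ((1:ℝ)/6) * G2 ^ ((1:ℝ)/2) := by
    have hsupp : Function.support (fun x => χ x ^ ((3:ℝ)/2)) ⊆ Metric.closedBall c R := by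
      intro x hx
      have h1 : fderiv ℝ v x ≠ 0 := by
        intro h0
        apply hx
        rw [hχ]; simp only [h0, norm_zero, ENNReal.ofReal_zero]; exact ENNReal.zero_rpow_of_pos (by norm_num)
      have h2 : x ∈ tsupport v := support_fderiv_subset ℝ (Function.mem_support.2 h1)
      have h3 : tsupport v ⊆ Metric.closedBall c R := by
        rw [← closure_ball c hR.ne']
        exact closure_mono hsv
      exact h3 h2
    have H := holder_const' volume ((mχ.pow_const _).aemeasurable) hsupp
      (p := 4) (q := 4/3) ⟨by norm_num, by norm_num, by norm_num⟩
    simp_rw [← ENNReal.rpow_mul] at H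
    norm_num [-EuclideanSpace.volume_closedBall_fin_two] at H
    rw [hμcB, hG2]
    calc (∫⁻ x, χ x ^ ((3:ℝ)/2)) ^ ((2:ℝ)/3)
        ≤ (volume (Metric.closedBall c R) ^ ((1:ℝ)/4) *
            (∫⁻ x, χ x ^ (2:ℕ)) ^ ((3:ℝ)/4)) ^ ((2:ℝ)/3) :=
          ENNReal.rpow_le_rpow H (by norm_num)
      _ = volume (Metric.closedBall c R) ^ ((1:ℝ)/6) * (∫⁻ x, χ x ^ (2:ℕ)) ^ ((1:ℝ)/2) := by
          rw [ENNReal.mul_rpow_of_nonneg _ _ (by norm_num), ← ENNReal.rpow_mul,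
            ← ENNReal.rpow_mul]
          norm_num
  -- assemble the main ennreal inequality
  have main : ENNReal.ofReal |∫ x, f (u x) * v x| ≤ D * (1 + A) * G2 ^ ((1:ℝ)/2) := by
    calc ENNReal.ofReal |∫ x, f (u x) * v x|
        ≤ ∫⁻ x, ENNReal.ofReal ‖f (u x) * v x‖ := step1
      _ ≤ ∫⁻ x, (c₁ * ψ x + c₂ * (φ x ^ ((7:ℝ)/3) * ψ x)) := lintegral_mono hpt
      _ = c₁ * (∫⁻ x, ψ x) + c₂ * ∫⁻ x, φ x ^ ((7:ℝ)/3) * ψ x := step3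
      _ ≤ c₁ * (μB ^ ((5:ℝ)/6) * V6 ^ ((1:ℝ)/6)) +
          c₂ * ((U2 ^ ((4:ℝ)/5) * U6 ^ ((1:ℝ)/5)) ^ ((5:ℝ)/6) * V6 ^ ((1:ℝ)/6)) := by
          exact add_le_add (mul_le_mul_right hT1 _) (mul_le_mul_right
            (hT2.trans (mul_le_mul_left (ENNReal.rpow_le_rpow hT3 (by norm_num)) _)) _)
      _ = (c₁ * μB ^ ((5:ℝ)/6) + c₂ * A) * V6 ^ ((1:ℝ)/6) := by
          rw [ENNReal.mul_rpow_of_nonneg _ _ (by norm_num : (0:ℝ) ≤ 5/6),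
            ← ENNReal.rpow_mul, ← ENNReal.rpow_mul, hA]
          norm_num
          ring
      _ ≤ (c₂ * (2 * μB ^ ((5:ℝ)/6) + 1)) * (1 + A) * V6 ^ ((1:ℝ)/6) := by
          gcongr
          have expand : (c₂ * (2 * μB ^ ((5:ℝ)/6) + 1)) * (1 + A) =
              (c₁ * μB ^ ((5:ℝ)/6) + c₂) + (c₁ * μB ^ ((5:ℝ)/6) * A + c₂ * A) := by
            rw [hc₁]; ring
          rw [expand]
          exact add_le_add le_self_add le_add_self
      _ ≤ (c₂ * (2 * μB ^ ((5:ℝ)/6) + 1)) * (1 + A) *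
          ((C₂ : ℝ≥0∞) * ((∫⁻ x, χ x ^ ((3:ℝ)/2)) ^ ((2:ℝ)/3))) := by gcongr
      _ ≤ (c₂ * (2 * μB ^ ((5:ℝ)/6) + 1)) * (1 + A) *
          ((C₂ : ℝ≥0∞) * (μcB ^ ((1:ℝ)/6) * G2 ^ ((1:ℝ)/2))) := by gcongr
      _ = D * (1 + A) * G2 ^ ((1:ℝ)/2) := by rw [hD, hc₂]; ring
  -- conversion to real integrals
  have iu2 : Integrable (fun x : EuclideanSpace ℝ (Fin 2) => u x ^ 2) :=
    ((hu.continuous.pow 2)).integrable_of_hasCompactSupport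
      (hcu.comp_left (g := fun y : ℝ => y ^ (2:ℕ)) (by simp))
  have iu6 : Integrable (fun x : EuclideanSpace ℝ (Fin 2) => |u x| ^ (6:ℕ)) :=
    ((hu.continuous.abs.pow 6)).integrable_of_hasCompactSupport
      (hcu.comp_left (g := fun y : ℝ => |y| ^ (6:ℕ)) (by simp))
  have ig2 : Integrable (fun x : EuclideanSpace ℝ (Fin 2) => ‖fderiv ℝ v x‖ ^ 2) :=
    ((hcf.norm.pow 2)).integrable_of_hasCompactSupport
      ((hcv.fderiv (𝕜 := ℝ)).norm.comp_left (g := fun y : ℝ => y ^ (2:ℕ)) (by simp))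
  have a2 : (0:ℝ) ≤ ∫ x, u x ^ 2 := integral_nonneg fun x => sq_nonneg _
  have a6 : (0:ℝ) ≤ ∫ x, |u x| ^ (6:ℕ) := integral_nonneg fun x => by positivity
  have eU2 : U2 = ENNReal.ofReal (∫ x, u x ^ 2) := by
    rw [ofReal_integral_eq_lintegral_ofReal iu2 (Filter.Eventually.of_forall fun x => sq_nonneg _),
      hU2]
    refine lintegral_congr fun x => ?_
    rw [hφ, ← ENNReal.ofReal_pow (abs_nonneg _), sq_abs]
  have eU6 : U6 = ENNReal.ofReal (∫ x, |u x| ^ (6:ℕ)) := by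
    rw [ofReal_integral_eq_lintegral_ofReal iu6
      (Filter.Eventually.of_forall fun x => by positivity), hU6]
    refine lintegral_congr fun x => ?_
    rw [hφ, ← ENNReal.ofReal_pow (abs_nonneg _)]
  have egrad : ∀ x : EuclideanSpace ℝ (Fin 2), ‖gradient v x‖ = ‖fderiv ℝ v x‖ := fun x => by
    unfold gradient; exact LinearIsometryEquiv.norm_map _ _
  have g2 : (0:ℝ) ≤ ∫ x, ‖gradient v x‖ ^ 2 := integral_nonneg fun x => sq_nonneg _
  have eG2 : G2 = ENNReal.ofReal (∫ x, ‖gradient v x‖ ^ 2) := by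
    simp_rw [egrad]
    rw [ofReal_integral_eq_lintegral_ofReal ig2
      (Filter.Eventually.of_forall fun x => sq_nonneg _), hG2]
    refine lintegral_congr fun x => ?_
    rw [hχ, ← ENNReal.ofReal_pow (norm_nonneg _)]
  -- final
  set a : ℝ := ((∫ x, u x ^ 2) ^ ((1:ℝ)/2)) ^ ((4:ℝ)/3) * (∫ x, |u x| ^ (6:ℕ)) ^ ((1:ℝ)/6) with ha
  set g : ℝ := (∫ x, ‖gradient v x‖ ^ 2) ^ ((1:ℝ)/2) with hg
  have ha' : (0:ℝ) ≤ a := by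
    rw [ha]
    have := Real.rpow_nonneg (Real.rpow_nonneg a2 ((1:ℝ)/2)) ((4:ℝ)/3)
    have := Real.rpow_nonneg a6 ((1:ℝ)/6)
    positivity
  have hg' : (0:ℝ) ≤ g := Real.rpow_nonneg g2 _
  have hAa : (1:ℝ≥0∞) + A = ENNReal.ofReal (1 + a) := by
    rw [ENNReal.ofReal_add (by norm_num) ha', ENNReal.ofReal_one]
    congr 1
    rw [hA, eU2, eU6, ha,
      ENNReal.ofReal_rpow_of_nonneg a2 (by norm_num),
      ENNReal.ofReal_rpow_of_nonneg a6 (by norm_num),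
      ← ENNReal.ofReal_mul (by positivity)]
    congr 2
    rw [← Real.rpow_mul a2]
    norm_num
  have hGg : G2 ^ ((1:ℝ)/2) = ENNReal.ofReal g := by
    rw [eG2, ENNReal.ofReal_rpow_of_nonneg g2 (by norm_num), hg]
  rw [hAa, hGg, ← ENNReal.ofReal_toReal hDt, ← ENNReal.ofReal_mul ENNReal.toReal_nonneg,
    ← ENNReal.ofReal_mul (by positivity)] at main
  exact (ENNReal.ofReal_le_ofReal_iff (by positivity)).1 main
end
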